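/- Let G be a connected graph on at least 2 vertices and a a vertex of G. If the largest eigenvalue of the adjacency matrix of G - a is strictly less than λ, then Φ(G, λ) < λ·Φ(G - a, λ), where Φ(H, x) denotes the characteristic polynomial det(xI - A(H)) of the adjacency matrix of H. -/

import Mathlib

open Classical
attribute [local instance] Classical.propDecidable

noncomputable section

/-- The list of eigenvalues of the adjacency matrix of `G` (with multiplicity),
sorted in ascending order. -/
def eigList {V : Type*} [Fintype V] [DecidableEq V] (G : SimpleGraph V) : List ℝ :=
  (Finset.univ.val.map (Matrix.IsHermitian.eigenvalues
    (by
      rw [Matrix.IsHermitian]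
      ext i j
      simp [Matrix.conjTranspose_apply, G.adj_comm j i] : (G.adjMatrix ℝ).IsHermitian))).sort (· ≤ ·)

/-- `lam G k` is the `k`-th largest eigenvalue (1-indexed, with multiplicity)
of the adjacency matrix of `G`; so `lam G 1 = λ₁(G)`, `lam G 2 = λ₂(G)`, etc. -/
def lam {V : Type*} [Fintype V] [DecidableEq V] (G : SimpleGraph V) (k : ℕ) : ℝ :=
  (eigList G).getD (Fintype.card V - k) 0

/-- `Phi G x = det (x I - A(G))`: the characteristic polynomial of the adjacency
matrix of `G`, evaluated at `x`. -/
def Phi {V : Type*} [Fintype V] [DecidableEq V] (G : SimpleGraph V) (x : ℝ) : ℝ :=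
  ((G.adjMatrix ℝ).charpoly).eval x

/-- The graph `G - a` obtained by deleting the vertex `a`. -/
def delVert {V : Type*} (G : SimpleGraph V) (a : V) : SimpleGraph {v : V // v ≠ a} :=
  G.induce {v : V | v ≠ a}

/-- The path graph `P_m` on `m` vertices `0 - 1 - ⋯ - (m-1)`. -/
def pathG (m : ℕ) : SimpleGraph (Fin m) :=
  SimpleGraph.fromRel (fun i j => i.val + 1 = j.val)

/-- The caterpillar `C(ℓ,r,k)`: the path `v_0 v_1 ⋯ v_{ℓ+r}` together with `k`
pendant leaves attached at the vertex `v_ℓ`. -/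
def caterpillar (l r k : ℕ) : SimpleGraph (Fin (l + r + k + 1)) :=
  SimpleGraph.fromRel (fun i j =>
    (i.val + 1 = j.val ∧ j.val ≤ l + r) ∨ (i.val = l ∧ l + r < j.val))

/-- The star `K_{1,n-1}`: vertex `0` adjacent to all other vertices. -/
def starG (n : ℕ) : SimpleGraph (Fin n) :=
  SimpleGraph.fromRel (fun i _ => i.val = 0)

/-- The double star `T(n-3,1)`: adjacent vertices `u = 0`, `v = 1`, where `u` has
the `n - 3` pendant leaves `2, …, n-2` and `v` has the single pendant leaf `n-1`. -/
def doubleStar (n : ℕ) : SimpleGraph (Fin n) :=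
  SimpleGraph.fromRel (fun i j =>
    (i.val = 0 ∧ 1 ≤ j.val ∧ j.val ≤ n - 2) ∨ (i.val = 1 ∧ j.val = n - 1))

/-- The caterpillar `T((n-3)/2, 0, (n-3)/2)`: a path `0 - 1 - 2` with `(n-3)/2`
pendant leaves attached at `0` and `(n-3)/2` pendant leaves attached at `2`. -/
def doubleBroom (n : ℕ) : SimpleGraph (Fin n) :=
  SimpleGraph.fromRel (fun i j =>
    (i.val = 0 ∧ j.val = 1) ∨ (i.val = 1 ∧ j.val = 2) ∨
    (i.val = 0 ∧ 3 ≤ j.val ∧ j.val < 3 + (n - 3) / 2) ∨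
    (i.val = 2 ∧ 3 + (n - 3) / 2 ≤ j.val))

/-- `(G1,a) ∘ (G2,b)`: the disjoint union of `G1` and `G2` together with the edge `ab`. -/
def connectRoots {V1 V2 : Type*} (G1 : SimpleGraph V1) (G2 : SimpleGraph V2) (a : V1) (b : V2) :
    SimpleGraph (V1 ⊕ V2) where
  Adj x y := match x, y with
    | .inl u, .inl v => G1.Adj u v
    | .inr u, .inr v => G2.Adj u v
    | .inl u, .inr v => u = a ∧ v = b
    | .inr u, .inl v => u = b ∧ v = a
  symm := by
    constructor
    rintro (u | u) (v | v) h
    · exact G1.adj_symm h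
    · exact ⟨h.2, h.1⟩
    · exact ⟨h.2, h.1⟩
    · exact G2.adj_symm h
  loopless := by
    constructor
    rintro (u | u) h
    · exact G1.irrefl h
    · exact G2.irrefl h

/-- `(G1,a) ∘ v ∘ (G2,b)`: the disjoint union of `G1` and `G2` together with a new
vertex (`none`) joined to exactly `a` and `b`. -/
def connectViaVertex {V1 V2 : Type*} (G1 : SimpleGraph V1) (G2 : SimpleGraph V2)
    (a : V1) (b : V2) : SimpleGraph (Option (V1 ⊕ V2)) where
  Adj x y := match x, y with
    | some (.inl u), some (.inl v) => G1.Adj u v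
    | some (.inr u), some (.inr v) => G2.Adj u v
    | none, some (.inl u) => u = a
    | some (.inl u), none => u = a
    | none, some (.inr u) => u = b
    | some (.inr u), none => u = b
    | _, _ => False
  symm := by
    constructor
    rintro (_ | (u | u)) (_ | (v | v)) h
    all_goals first
      | exact False.elim h
      | exact h
      | exact G1.adj_symm h
      | exact G2.adj_symm h
  loopless := by
    constructor
    rintro (_ | (u | u)) h
    · exact False.elim h
    · exact G1.irrefl h
    · exact G2.irrefl h

/-!
Write `A = A(G)`, `D = μI - A(G - a)` and `b` for the row of `A` at `a`, restricted to `G - a`.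
Taking the Schur complement of `D` in `μI - A` gives `Φ(G, μ) = Φ(G - a, μ) · (μ - bᵀ D⁻¹ b)`.
Since `μ` exceeds every eigenvalue of `A(G - a)`, `D` is positive definite, so `det D > 0` and
`bᵀ D⁻¹ b > 0` as soon as `b ≠ 0`, i.e. as soon as `a` has a neighbour, which connectedness
guarantees.
-/

open Matrix
open scoped MatrixOrder ComplexOrder

namespace Matrix

variable {n 𝕜 : Type*} [Fintype n] [DecidableEq n] [RCLike 𝕜]

theorem IsHermitian.posDef_scalar_sub {A : Matrix n n 𝕜} (hA : A.IsHermitian) {μ : ℝ}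
    (h : ∀ i, hA.eigenvalues i < μ) : (scalar n (μ : 𝕜) - A).PosDef := by
  rw [show scalar n (μ : 𝕜) = algebraMap ℝ (Matrix n n 𝕜) μ by
      rw [algebraMap_eq_diagonal]; rfl,
    ← isStrictlyPositive_iff_posDef,
    StarOrderedRing.isStrictlyPositive_iff_spectrum_pos (R := ℝ) _
      ((IsSelfAdjoint.algebraMap _ (.all μ)).sub hA), ← spectrum.singleton_sub_eq,
    hA.spectrum_real_eq_range_eigenvalues]
  rintro _ ⟨_, rfl, _, ⟨i, rfl⟩, rfl⟩
  simpa using h i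

variable {V R : Type*} [Fintype V] [DecidableEq V] [CommRing R]

theorem det_eq_det_submatrix_ne_mul (M : Matrix V V R) (a : V)
    (hD : IsUnit (M.submatrix (↑) (↑) : Matrix {v // v ≠ a} {v // v ≠ a} R)) :
    M.det = (M.submatrix (↑) (↑) : Matrix {v // v ≠ a} {v // v ≠ a} R).det *
      (M a a - (fun i : {v // v ≠ a} => M a i) ⬝ᵥ
        ((M.submatrix (↑) (↑) : Matrix {v // v ≠ a} {v // v ≠ a} R)⁻¹ *ᵥ
          fun i : {v // v ≠ a} => M i a)) := by
  set e := Equiv.sumCompl (· = a)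
  have := hD.invertible
  have h22 : (M.submatrix e e).toBlocks₂₂ = M.submatrix (↑) (↑) := rfl
  rw [← det_submatrix_equiv_self e, ← fromBlocks_toBlocks (M.submatrix e e), h22,
    det_fromBlocks₂₂, det_unique (_ - _), invOf_eq_nonsing_inv, dotProduct_mulVec]
  rfl

end Matrix

namespace SimpleGraph

variable {V : Type*} (G : SimpleGraph V)

theorem adjMatrix_delVert {α : Type*} [Zero α] [One α] (a : V) :
    (delVert G a).adjMatrix α = (G.adjMatrix α).submatrix (↑) (↑) :=
  ((Embedding.induce _).submatrix_adjMatrix α).symm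

variable [Fintype V] [DecidableEq V]

theorem eigenvalues_le_lam_one (i : V) :
    (G.isHermitian_adjMatrix ℝ).eigenvalues i ≤ lam G 1 := by
  have hsorted : (eigList G).Pairwise (· ≤ ·) := Multiset.pairwise_sort _ _
  have hlen : (eigList G).length = Fintype.card V := by
    simp [eigList]
  have hmem : (G.isHermitian_adjMatrix ℝ).eigenvalues i ∈ eigList G := by
    simp [eigList]
  have hne : eigList G ≠ [] := List.ne_nil_of_mem hmem
  rw [lam, ← hlen, List.getD_eq_getElem _ _ (by simpa [List.length_pos_iff] using hne),
    ← List.getLast_eq_getElem hne]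
  exact hsorted.rel_getLast hmem

theorem Phi_eq_det (x : ℝ) : Phi G x = (scalar V x - G.adjMatrix ℝ).det :=
  eval_charpoly _ _

theorem Phi_eq_Phi_delVert_mul (a : V) (x : ℝ)
    (hD : IsUnit (scalar {v // v ≠ a} x - (delVert G a).adjMatrix ℝ)) :
    Phi G x = Phi (delVert G a) x *
      (x - (fun i : {v // v ≠ a} => G.adjMatrix ℝ a i) ⬝ᵥ
        ((scalar {v // v ≠ a} x - (delVert G a).adjMatrix ℝ)⁻¹ *ᵥ
          fun i : {v // v ≠ a} => G.adjMatrix ℝ a i)) := by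
  set M := scalar V x - G.adjMatrix ℝ
  have hsub : M.submatrix (↑) (↑) = scalar {v // v ≠ a} x - (delVert G a).adjMatrix ℝ := by
    ext i j
    simp [M, G.adjMatrix_delVert, diagonal_apply, Subtype.ext_iff]
  have hrow : (fun i : {v // v ≠ a} => M a i) = -fun i : {v // v ≠ a} => G.adjMatrix ℝ a i := by
    ext i
    simp [M, Ne.symm i.2]
  have hcol : (fun i : {v // v ≠ a} => M i a) = -fun i : {v // v ≠ a} => G.adjMatrix ℝ a i := by
    ext i
    simp [M, i.2, G.adj_comm]
  rw [G.Phi_eq_det, (delVert G a).Phi_eq_det, det_eq_det_submatrix_ne_mul M a (hsub ▸ hD), hsub,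
    hrow, hcol, mulVec_neg, neg_dotProduct, dotProduct_neg, neg_neg]
  simp [M]

end SimpleGraph

/-- If `G` is connected on at least 2 vertices and `λ₁(G - a) < μ`,
then `Φ(G, μ) < μ · Φ(G - a, μ)`. -/
theorem stmt_0 {V : Type*} [Fintype V] [DecidableEq V] (G : SimpleGraph V)
    (hG : G.Connected) (hcard : 2 ≤ Fintype.card V) (a : V) (μ : ℝ)
    (h : lam (delVert G a) 1 < μ) :
    Phi G μ < μ * Phi (delVert G a) μ := by
  have : Nontrivial V := Fintype.one_lt_card_iff_nontrivial.mp hcard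
  obtain ⟨c, hac⟩ := hG.preconnected.exists_adj_of_nontrivial a
  set D := scalar {v // v ≠ a} μ - (delVert G a).adjMatrix ℝ
  have hD : D.PosDef := ((delVert G a).isHermitian_adjMatrix ℝ).posDef_scalar_sub
    fun i => ((delVert G a).eigenvalues_le_lam_one i).trans_lt h
  set b : {v // v ≠ a} → ℝ := fun i => G.adjMatrix ℝ a i
  have hb : b ≠ 0 := fun h0 => by
    simpa [b, hac] using congrFun h0 ⟨c, (G.ne_of_adj hac).symm⟩
  have hq : 0 < b ⬝ᵥ (D⁻¹ *ᵥ b) := by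
    simpa using hD.inv.dotProduct_mulVec_pos hb
  rw [G.Phi_eq_Phi_delVert_mul a μ hD.isUnit, (delVert G a).Phi_eq_det]
  nlinarith [hD.det_pos]

end
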